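/- For a signed bipartite graph (G, σ) and a rational p/q in [2,4] with p even and p/q in simplest form subject to p even: χ_c(G, σ) ≤ p/q if and only if (G, σ) admits a switching homomorphism to B_{p;q}. -/

import Mathlib

/-!
Multiplying a circular `p/q`-coloring by `q` gives a map to the circle of circumference `p` in
which the endpoints of a positive edge are at distance at least `q`, and each endpoint of a
negative edge is at distance at least `q` from the antipode of the other. On the points
`0, …, p-1` these are exactly the adjacencies of `K^s_{p;q}`, so the coloring `i ↦ i / q` of
`B_{p;q}` pulls back along a switching homomorphism.

Conversely, the infimum defining `χ_c` is attained, by Cantor's intersection theorem in the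
compact cube `[0, r]^V`, and the scaled coloring is rounded to integers whose parities follow a
bipartition of `G`. If `4 ∣ p`, then `q` is odd, and rounding each vertex to an integer of its
class parity at distance at most `1` keeps the relevant distances odd; an odd integer below `q` is
at most `q - 2`, which absorbs the rounding error `< 2`. If `p ≡ 2 (mod 4)`, round down instead
(error `< 1`, integers below `q` are at most `q - 1`) and repair the parities by adding the odd
number `p/2` and switching at the vertices concerned.
-/

/-- A signed graph: two symmetric edge relations (positive and negative edges).
Parallel edges of different signs (digons) and negative loops are representable;
positive loops are disallowed (graphs in the paper have no loops unless specified,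
loops occurring in circular cliques are always negative). -/
structure SGraph (V : Type) where
  pos : V → V → Prop
  neg : V → V → Prop
  pos_symm : ∀ u v, pos u v → pos v u
  neg_symm : ∀ u v, neg u v → neg v u
  pos_irrefl : ∀ v, ¬ pos v v

namespace SGraph

variable {V W : Type}

/-- An edge-sign preserving homomorphism: preserves adjacency and edge signs. -/
def IsSpHom (G : SGraph V) (H : SGraph W) (f : V → W) : Prop :=
  (∀ u v, G.pos u v → H.pos (f u) (f v)) ∧ (∀ u v, G.neg u v → H.neg (f u) (f v))

/-- The signed graph obtained from `G` by switching at the set of vertices where `s` is `true`: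
the sign of an edge is flipped exactly when its endpoints get different values of `s`. -/
def switch (G : SGraph V) (s : V → Bool) : SGraph V where
  pos u v := (s u = s v ∧ G.pos u v) ∨ (s u ≠ s v ∧ G.neg u v)
  neg u v := (s u = s v ∧ G.neg u v) ∨ (s u ≠ s v ∧ G.pos u v)
  pos_symm := by
    rintro u v (⟨h, hp⟩ | ⟨h, hn⟩)
    · exact Or.inl ⟨h.symm, G.pos_symm u v hp⟩
    · exact Or.inr ⟨fun e => h e.symm, G.neg_symm u v hn⟩
  neg_symm := by
    rintro u v (⟨h, hn⟩ | ⟨h, hp⟩)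
    · exact Or.inl ⟨h.symm, G.neg_symm u v hn⟩
    · exact Or.inr ⟨fun e => h e.symm, G.pos_symm u v hp⟩
  pos_irrefl := by
    rintro v (⟨_, hp⟩ | ⟨h, _⟩)
    · exact G.pos_irrefl v hp
    · exact h rfl

/-- A switching homomorphism: an edge-sign preserving homomorphism after switching
at a suitable set of vertices of the source (equivalently, a vertex map preserving
adjacency and the signs of closed walks). -/
def SwHom (G : SGraph V) (H : SGraph W) : Prop :=
  ∃ (s : V → Bool) (f : V → W), (G.switch s).IsSpHom H f

/-- The underlying graph of the signed graph is bipartite. -/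
def Bipartite (G : SGraph V) : Prop :=
  ∃ c : V → Bool, ∀ u v, G.pos u v ∨ G.neg u v → c u ≠ c v

end SGraph

/-- `x` reduced modulo `r` into `[0, r)` (for `r > 0`). -/
noncomputable def rmod (x r : ℝ) : ℝ := x - r * ⌊x / r⌋

/-- The circular distance between the points `x` and `y` of the circle of
circumference `r` (the length of the shorter arc joining them). -/
noncomputable def cdist (r x y : ℝ) : ℝ := min (rmod (x - y) r) (rmod (y - x) r)

namespace SGraph

variable {V : Type}

/-- A circular `r`-coloring of a signed graph: vertices get points of a circle of
circumference `r` such that the endpoints of each positive edge are at circular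
distance at least `1`, and each endpoint of a negative edge is at circular distance
at least `1` from the antipode of the other endpoint (equivalently, the endpoints of
a negative edge are at circular distance at most `r/2 - 1`). -/
def IsCircColoring (G : SGraph V) (r : ℝ) (φ : V → ℝ) : Prop :=
  (∀ u v, G.pos u v → 1 ≤ cdist r (φ u) (φ v)) ∧
  (∀ u v, G.neg u v → 1 ≤ cdist r (φ u) (φ v + r / 2))

/-- The circular chromatic number of a signed graph. -/
noncomputable def circChrom (G : SGraph V) : ℝ :=
  sInf {r : ℝ | 1 ≤ r ∧ ∃ φ : V → ℝ, G.IsCircColoring r φ}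

end SGraph

/-- The signed circular clique `K^s_{p;q}` on vertices `{0, …, p-1}`:
`ij` is a positive edge iff `q ≤ |i-j| ≤ p-q`, and `ij` is a negative edge iff
`|i-j| ≤ p/2 - q` or `|i-j| ≥ p/2 + q` (stated multiplied by `2` to avoid division;
`p` is even in all uses).  In particular there is a negative loop at every vertex. -/
def Ksclique (p q : ℕ) : SGraph (Fin p) where
  pos i j := i ≠ j ∧ (q : ℤ) ≤ |(i.val : ℤ) - (j.val : ℤ)| ∧
    |(i.val : ℤ) - (j.val : ℤ)| ≤ (p : ℤ) - q
  neg i j := 2 * |(i.val : ℤ) - (j.val : ℤ)| ≤ (p : ℤ) - 2 * q ∨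
    (p : ℤ) + 2 * q ≤ 2 * |(i.val : ℤ) - (j.val : ℤ)|
  pos_symm := by
    rintro i j ⟨hne, h1, h2⟩
    refine ⟨hne.symm, ?_, ?_⟩ <;> rwa [abs_sub_comm]
  neg_symm := by
    rintro i j (h | h)
    · left; rwa [abs_sub_comm]
    · right; rwa [abs_sub_comm]
  pos_irrefl := fun i h => h.1 rfl

/-- The signed bipartite circular clique `B_{p;q}`: the subgraph of `K^s_{p;q}`
consisting of the edges joining an even-labelled vertex to an odd-labelled vertex,
with the inherited signs. -/
def Bclique (p q : ℕ) : SGraph (Fin p) where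
  pos i j := (Ksclique p q).pos i j ∧ i.val % 2 ≠ j.val % 2
  neg i j := (Ksclique p q).neg i j ∧ i.val % 2 ≠ j.val % 2
  pos_symm := by
    rintro i j ⟨h, hp⟩
    exact ⟨(Ksclique p q).pos_symm i j h, fun e => hp e.symm⟩
  neg_symm := by
    rintro i j ⟨h, hp⟩
    exact ⟨(Ksclique p q).neg_symm i j h, fun e => hp e.symm⟩
  pos_irrefl := fun i h => h.2 rfl

section CircularDistance

variable {r : ℝ}

theorem rmod_eq_mul_fract (hr : 0 < r) (x : ℝ) : rmod x r = r * Int.fract (x / r) := by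
  rw [rmod, Int.fract, mul_sub, mul_div_cancel₀ _ hr.ne']

theorem rmod_mem_Icc (hr : 0 < r) (x : ℝ) : rmod x r ∈ Set.Icc 0 r := by
  rw [rmod_eq_mul_fract hr]
  exact ⟨mul_nonneg hr.le (Int.fract_nonneg _),
    mul_le_of_le_one_right hr.le (Int.fract_lt_one _).le⟩

theorem cdist_eq_norm (hr : 0 < r) (x y : ℝ) : cdist r x y = ‖((x - y : ℝ) : AddCircle r)‖ := by
  rw [cdist, rmod_eq_mul_fract hr, rmod_eq_mul_fract hr, AddCircle.norm_eq' r hr,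
    inv_mul_eq_div, abs_sub_round_eq_min, mul_min_of_nonneg _ _ hr.le,
    show (y - x) / r = -((x - y) / r) by ring]
  by_cases h : Int.fract ((x - y) / r) = 0
  · simp [h, Int.fract_neg_eq_zero.mpr h, hr.le]
  · rw [Int.fract_neg h]

theorem exists_cdist_eq_abs (hr : 0 < r) (x y : ℝ) : ∃ k : ℤ, cdist r x y = |x - y - k * r| :=
  ⟨_, by rw [cdist_eq_norm hr, AddCircle.norm_eq]⟩

theorem cdist_le_cdist_add_abs (hr : 0 < r) (x y x' y' : ℝ) :
    cdist r x y ≤ cdist r x' y' + |x - y - (x' - y')| := by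
  rw [cdist_eq_norm hr, cdist_eq_norm hr, ← Real.norm_eq_abs]
  calc ‖((x - y : ℝ) : AddCircle r)‖
      ≤ ‖((x' - y' : ℝ) : AddCircle r)‖ + ‖((x - y : ℝ) : AddCircle r) - (x' - y' : ℝ)‖ :=
        norm_le_norm_add_norm_sub' _ _
    _ ≤ _ := by
      rw [← AddCircle.coe_sub]
      exact add_le_add_right
        (QuotientAddGroup.norm_mk_le_norm (S := AddSubgroup.zmultiples r)) _

theorem cdist_eq_of_sub_eq (hr : 0 < r) {x y x' y' : ℝ} (k : ℤ) (h : x - y = x' - y' + k * r) :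
    cdist r x y = cdist r x' y' := by
  rw [cdist_eq_norm hr, cdist_eq_norm hr, h, AddCircle.coe_add, ← zsmul_eq_mul,
    AddCircle.coe_zsmul, AddCircle.coe_period, smul_zero, add_zero]

theorem cdist_add_half_left (hr : 0 < r) (x y : ℝ) :
    cdist r (x + r / 2) y = cdist r x (y + r / 2) :=
  cdist_eq_of_sub_eq hr 1 (by push_cast; ring)

theorem cdist_add_half_add_half_right (hr : 0 < r) (x y : ℝ) :
    cdist r x (y + r / 2 + r / 2) = cdist r x y :=
  cdist_eq_of_sub_eq hr (-1) (by push_cast; ring)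

theorem cdist_mul {c : ℝ} (hc : 0 < c) (hr : 0 < r) (x y : ℝ) :
    cdist (c * r) (c * x) (c * y) = c * cdist r x y := by
  rw [cdist_eq_norm (mul_pos hc hr), cdist_eq_norm hr, ← mul_sub, AddCircle.norm_coe_mul,
    abs_of_pos hc]

theorem Continuous.cdist {X : Type*} [TopologicalSpace X] {f g : X → ℝ} (hr : 0 < r)
    (hf : Continuous f) (hg : Continuous g) : Continuous fun t => cdist r (f t) (g t) := by
  simp_rw [cdist_eq_norm hr]
  exact continuous_norm.comp ((AddCircle.continuous_mk' r).comp (hf.sub hg))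

theorem AddCircle.norm_coe_abs (x : ℝ) : ‖((|x| : ℝ) : AddCircle r)‖ = ‖(x : AddCircle r)‖ := by
  rcases abs_cases x with ⟨h, _⟩ | ⟨h, _⟩ <;> simp [h]

theorem cdist_eq_min_of_abs_le (hr : 0 < r) {x y : ℝ} (h : |x - y| ≤ r) :
    cdist r x y = min |x - y| (r - |x - y|) := by
  rw [cdist_eq_norm hr, ← AddCircle.norm_coe_abs]
  set t := |x - y|
  rcases le_total t (r / 2) with ht | ht
  · rw [(AddCircle.norm_coe_eq_abs_iff r hr.ne').mpr (by rwa [abs_abs, abs_of_pos hr]),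
      abs_abs, min_eq_left (by linarith)]
  · have hsub : |t - r| ≤ |r| / 2 := by
      rw [abs_of_pos hr, abs_of_nonpos (by linarith)]
      linarith
    have hshift : ((t : ℝ) : AddCircle r) = ((t - r : ℝ) : AddCircle r) := by
      rw [← AddCircle.coe_add_period r (t - r), sub_add_cancel]
    rw [hshift, (AddCircle.norm_coe_eq_abs_iff r hr.ne').mpr hsub,
      abs_of_nonpos (by linarith), min_eq_right (by linarith)]
    ring

theorem cdist_add_half_of_abs_le (hr : 0 < r) {x y : ℝ} (h : |x - y| ≤ r) :
    cdist r x (y + r / 2) = |(|x - y| - r / 2)| := by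
  have hsym : ‖((x - (y + r / 2) : ℝ) : AddCircle r)‖ =
      ‖((|x - y| - r / 2 : ℝ) : AddCircle r)‖ := by
    rcases abs_cases (x - y) with ⟨hxy, _⟩ | ⟨hxy, _⟩
    · rw [hxy, sub_add_eq_sub_sub]
    · rw [hxy, ← norm_neg, ← AddCircle.coe_neg,
        show -(x - (y + r / 2)) = -(x - y) - r / 2 + r by ring, AddCircle.coe_add_period]
  rw [cdist_eq_norm hr, hsym, AddCircle.norm_coe_eq_abs_iff r hr.ne', abs_of_pos hr, abs_le]
  constructor <;> linarith [abs_nonneg (x - y)]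

theorem le_cdist_of_abs_sub_lt {d δ x y x' y' : ℝ} (hr : 0 < r) (h : d ≤ cdist r x y)
    (hnear : |x' - y' - (x - y)| < δ)
    (hgap : ∀ k : ℤ, |x' - y' - k * r| < d → |x' - y' - k * r| ≤ d - δ) :
    d ≤ cdist r x' y' := by
  obtain ⟨k, hk⟩ := exists_cdist_eq_abs hr x' y'
  by_contra hlt
  rw [not_le, hk] at hlt
  have := cdist_le_cdist_add_abs hr x y x' y'
  rw [abs_sub_comm, hk] at this
  linarith [hgap k hlt]

end CircularDistance

theorem Int.abs_le_sub_two_of_odd {n q : ℤ} (hn : Odd n) (hq : Odd q) (h : |n| < q) :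
    |n| ≤ q - 2 := by
  obtain ⟨a, rfl⟩ := hn
  obtain ⟨b, rfl⟩ := hq
  rcases abs_cases (2 * a + 1) with ⟨h', _⟩ | ⟨h', _⟩ <;> rw [h'] at h ⊢ <;> omega

theorem exists_int_near_of_parity (a : ℝ) (b : ℤ) :
    ∃ n : ℤ, n % 2 = b % 2 ∧ -1 < (n - a : ℝ) ∧ (n - a : ℝ) ≤ 1 := by
  refine ⟨2 * ⌊(a - b + 1) / 2⌋ + b, by omega, ?_⟩
  have h₁ := Int.floor_le ((a - b + 1) / 2)
  have h₂ := Int.lt_floor_add_one ((a - b + 1) / 2)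
  push_cast
  constructor <;> linarith

open scoped Fin.IntCast in
theorem Fin.intCast_val_eq_emod {p : ℕ} [NeZero p] (x : ℤ) :
    (((x : Fin p)).val : ℤ) = x % p := by
  rw [Fin.val_intCast, Int.toNat_of_nonneg (Int.emod_nonneg x (by exact_mod_cast NeZero.ne p))]

theorem Fin.abs_cast_sub_cast_le {p : ℕ} (i j : Fin p) : |(i : ℝ) - j| ≤ p := by
  have hi : (i : ℝ) < p := by exact_mod_cast i.isLt
  have hj : (j : ℝ) < p := by exact_mod_cast j.isLt
  rw [abs_le]
  constructor <;> linarith [(i.val.cast_nonneg : (0 : ℝ) ≤ i), (j.val.cast_nonneg : (0 : ℝ) ≤ j)]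

theorem Fin.abs_cast_sub_cast_eq {p : ℕ} (i j : Fin p) :
    |(i : ℝ) - j| = ((|(i.val : ℤ) - (j.val : ℤ)| : ℤ) : ℝ) := by
  push_cast
  rfl

theorem Ksclique_pos_iff {p q : ℕ} (hq : 0 < q) (i j : Fin p) :
    (Ksclique p q).pos i j ↔ (q : ℝ) ≤ cdist p i j := by
  have hp : (0 : ℝ) < p := by exact_mod_cast i.pos
  have hne : (q : ℤ) ≤ |(i.val : ℤ) - j.val| → i ≠ j := by
    rintro h rfl
    rw [sub_self, abs_zero] at h
    omega
  rw [cdist_eq_min_of_abs_le hp (Fin.abs_cast_sub_cast_le i j), le_min_iff,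
    Fin.abs_cast_sub_cast_eq]
  simp only [Ksclique]
  rw [and_iff_right_of_imp fun h => hne h.1]
  generalize |(i.val : ℤ) - j.val| = a
  constructor <;> rintro ⟨h₁, h₂⟩ <;>
    exact ⟨by exact_mod_cast h₁, by rw [le_sub_comm]; exact_mod_cast h₂⟩

theorem Ksclique_neg_iff {p q : ℕ} (i j : Fin p) :
    (Ksclique p q).neg i j ↔ (q : ℝ) ≤ cdist p i (j + p / 2) := by
  have hp : (0 : ℝ) < p := by exact_mod_cast i.pos
  rw [cdist_add_half_of_abs_le hp (Fin.abs_cast_sub_cast_le i j), le_abs',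
    Fin.abs_cast_sub_cast_eq]
  simp only [Ksclique]
  generalize |(i.val : ℤ) - j.val| = a
  have h₁ : (a : ℝ) - p / 2 ≤ -q ↔ 2 * a ≤ (p : ℤ) - 2 * q := by
    rw [← Int.cast_le (R := ℝ)]
    push_cast
    constructor <;> intro <;> linarith
  have h₂ : (q : ℝ) ≤ a - p / 2 ↔ (p : ℤ) + 2 * q ≤ 2 * a := by
    rw [← Int.cast_le (R := ℝ)]
    push_cast
    constructor <;> intro <;> linarith
  rw [h₁, h₂]

namespace SGraph

variable {V W : Type} {G : SGraph V} {r d : ℝ} {φ : V → ℝ}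

def IsCircGapColoring (G : SGraph V) (r d : ℝ) (φ : V → ℝ) : Prop :=
  (∀ u v, G.pos u v → d ≤ cdist r (φ u) (φ v)) ∧
  (∀ u v, G.neg u v → d ≤ cdist r (φ u) (φ v + r / 2))

theorem isCircGapColoring_one : G.IsCircGapColoring r 1 φ ↔ G.IsCircColoring r φ := Iff.rfl

theorem IsCircGapColoring.mono {d' : ℝ} (h : G.IsCircGapColoring r d φ) (hd : d' ≤ d) :
    G.IsCircGapColoring r d' φ :=
  ⟨fun u v huv => hd.trans (h.1 u v huv), fun u v huv => hd.trans (h.2 u v huv)⟩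

theorem IsCircGapColoring.of_forall_lt (h : ∀ d' < d, G.IsCircGapColoring r d' φ) :
    G.IsCircGapColoring r d φ :=
  ⟨fun u v huv => le_of_forall_lt_imp_le_of_dense fun d' hd' => (h d' hd').1 u v huv,
    fun u v huv => le_of_forall_lt_imp_le_of_dense fun d' hd' => (h d' hd').2 u v huv⟩

theorem IsCircGapColoring.mul {c : ℝ} (hc : 0 < c) (hr : 0 < r)
    (h : G.IsCircGapColoring r d φ) :
    G.IsCircGapColoring (c * r) (c * d) (fun v => c * φ v) := by
  refine ⟨fun u v huv => ?_, fun u v huv => ?_⟩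
  · rw [cdist_mul hc hr]
    exact mul_le_mul_of_nonneg_left (h.1 u v huv) hc.le
  · rw [show c * φ v + c * r / 2 = c * (φ v + r / 2) by ring, cdist_mul hc hr]
    exact mul_le_mul_of_nonneg_left (h.2 u v huv) hc.le

theorem IsCircGapColoring.add_int_mul (hr : 0 < r) (h : G.IsCircGapColoring r d φ)
    (k : V → ℤ) : G.IsCircGapColoring r d (fun v => φ v + k v * r) := by
  refine ⟨fun u v huv => ?_, fun u v huv => ?_⟩
  · rw [cdist_eq_of_sub_eq hr (k u - k v) (x' := φ u) (y' := φ v) (by push_cast; ring)]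
    exact h.1 u v huv
  · rw [cdist_eq_of_sub_eq hr (k u - k v) (x' := φ u) (y' := φ v + r / 2) (by push_cast; ring)]
    exact h.2 u v huv

theorem IsCircGapColoring.rmod (hr : 0 < r) (h : G.IsCircGapColoring r d φ) :
    G.IsCircGapColoring r d (fun v => rmod (φ v) r) := by
  convert h.add_int_mul hr (fun v => -⌊φ v / r⌋) using 2 with v
  rw [_root_.rmod]
  push_cast
  ring

theorem IsSpHom.isCircGapColoring_comp {H : SGraph W} {f : V → W} {ψ : W → ℝ}
    (hf : G.IsSpHom H f) (h : H.IsCircGapColoring r d ψ) : G.IsCircGapColoring r d (ψ ∘ f) :=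
  ⟨fun u v huv => h.1 _ _ (hf.1 u v huv), fun u v huv => h.2 _ _ (hf.2 u v huv)⟩

theorem IsSpHom.swHom {H : SGraph W} {f : V → W} (hf : G.IsSpHom H f) : G.SwHom H :=
  ⟨fun _ => false, f, by simpa [IsSpHom, switch] using hf⟩

theorem switch_switch (G : SGraph V) (s : V → Bool) : (G.switch s).switch s = G := by
  obtain ⟨pos, neg, _, _, _⟩ := G
  simp only [switch, mk.injEq]
  constructor <;> funext u v <;> by_cases h : s u = s v <;> simp [h]

theorem switch_pos_or_neg {s : V → Bool} {u v : V}
    (h : (G.switch s).pos u v ∨ (G.switch s).neg u v) : G.pos u v ∨ G.neg u v := by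
  rcases h with (⟨_, h⟩ | ⟨_, h⟩) | (⟨_, h⟩ | ⟨_, h⟩) <;> simp [h]

/-- Switching at exactly one endpoint of an edge moves that endpoint to its antipode, which
exchanges the conditions for positive and negative edges. -/
theorem IsCircGapColoring.switch (hr : 0 < r) (h : G.IsCircGapColoring r d φ) (s : V → Bool) :
    (G.switch s).IsCircGapColoring r d (fun v => φ v + if s v then r / 2 else 0) := by
  obtain ⟨hpos, hneg⟩ := h
  constructor <;> rintro u v (⟨hs, huv⟩ | ⟨hs, huv⟩) <;>
    cases hu : s u <;> cases hv : s v <;> simp only [hu, hv] at hs <;>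
    simp_all [cdist_add_half_left hr, cdist_add_half_add_half_right hr]

theorem IsCircGapColoring.of_switch (hr : 0 < r) {s : V → Bool}
    (h : (G.switch s).IsCircGapColoring r d φ) :
    G.IsCircGapColoring r d (fun v => φ v + if s v then r / 2 else 0) := by
  simpa only [switch_switch] using h.switch hr s

theorem circChrom_le (hr : 1 ≤ r) (h : G.IsCircColoring r φ) : G.circChrom ≤ r :=
  csInf_le ⟨1, fun _ hρ => hρ.1⟩ ⟨hr, φ, h⟩

theorem Bipartite.exists_isCircColoring_four (hG : G.Bipartite) :
    ∃ φ : V → ℝ, G.IsCircColoring 4 φ := by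
  obtain ⟨c, hc⟩ := hG
  let φ : V → ℝ := fun v => if c v then 1 else 0
  have hφ : ∀ u v, G.pos u v ∨ G.neg u v → |φ u - φ v| = 1 := by
    intro u v huv
    have := hc u v huv
    revert this
    simp only [φ]
    cases c u <;> cases c v <;> norm_num
  refine ⟨φ, fun u v huv => ?_, fun u v huv => ?_⟩
  · rw [cdist_eq_min_of_abs_le (by norm_num) (by rw [hφ u v (.inl huv)]; norm_num),
      hφ u v (.inl huv)]
    norm_num
  · rw [cdist_add_half_of_abs_le (by norm_num) (by rw [hφ u v (.inr huv)]; norm_num),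
      hφ u v (.inr huv)]
    norm_num

theorem isClosed_setOf_isCircGapColoring (hr : 0 < r) :
    IsClosed {φ : V → ℝ | G.IsCircGapColoring r d φ} := by
  simp only [IsCircGapColoring, Set.ofPred_and, Set.ofPred_forall]
  refine .inter ?_ ?_ <;>
    exact isClosed_iInter fun u => isClosed_iInter fun v => isClosed_iInter fun _ =>
      isClosed_le continuous_const (Continuous.cdist hr (continuous_apply u) (by fun_prop))

theorem exists_isCircGapColoring_mem_Icc
    (hne : {ρ : ℝ | 1 ≤ ρ ∧ ∃ φ : V → ℝ, G.IsCircColoring ρ φ}.Nonempty)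
    (hle : G.circChrom ≤ r) (hr : 0 < r) (hd : 0 < d) (hd1 : d < 1) :
    ∃ φ : V → ℝ, G.IsCircGapColoring r d φ ∧ ∀ v, φ v ∈ Set.Icc 0 r := by
  have hlt : G.circChrom < r / d := hle.trans_lt ((lt_div_iff₀ hd).mpr (by nlinarith))
  obtain ⟨ρ, ⟨hρ1, φ, hφ⟩, hρ⟩ := exists_lt_of_csInf_lt hne hlt
  have hρ0 : 0 < ρ := by linarith
  have hdρ : d ≤ r / ρ * 1 := by
    rw [mul_one, le_div_iff₀ hρ0]
    rw [lt_div_iff₀ hd] at hρ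
    linarith
  have hscaled := ((isCircGapColoring_one.mpr hφ).mul (div_pos hr hρ0) hρ0).mono hdρ
  rw [div_mul_cancel₀ _ hρ0.ne'] at hscaled
  exact ⟨_, hscaled.rmod hr, fun v => rmod_mem_Icc hr _⟩

theorem exists_isCircColoring_of_circChrom_le
    (hne : {ρ : ℝ | 1 ≤ ρ ∧ ∃ φ : V → ℝ, G.IsCircColoring ρ φ}.Nonempty)
    (hle : G.circChrom ≤ r) (hr : 0 < r) : ∃ φ : V → ℝ, G.IsCircColoring r φ := by
  let C : Set.Ico (1 / 2 : ℝ) 1 → Set (V → ℝ) := fun d =>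
    Set.univ.pi (fun _ => Set.Icc 0 r) ∩ {φ | G.IsCircGapColoring r d φ}
  have : Nonempty (Set.Ico (1 / 2 : ℝ) 1) := ⟨⟨1 / 2, by norm_num, by norm_num⟩⟩
  have hC : (⋂ d, C d).Nonempty := by
    refine IsCompact.nonempty_iInter_of_directed_nonempty_isCompact_isClosed C ?_ ?_ ?_ ?_
    · intro d₁ d₂
      refine ⟨⟨max d₁ d₂, le_max_of_le_left d₁.2.1, max_lt d₁.2.2 d₂.2.2⟩, ?_, ?_⟩ <;>
        exact Set.inter_subset_inter_right _ fun φ hφ => hφ.mono (by simp)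
    · rintro ⟨d, hd, hd1⟩
      obtain ⟨φ, hφ, hφr⟩ := exists_isCircGapColoring_mem_Icc hne hle hr (by linarith) hd1
      exact ⟨φ, fun v _ => hφr v, hφ⟩
    · exact fun d => (isCompact_univ_pi fun _ => isCompact_Icc).inter_right
        (isClosed_setOf_isCircGapColoring hr)
    · exact fun d => (isClosed_set_pi fun _ _ => isClosed_Icc).inter
        (isClosed_setOf_isCircGapColoring hr)
  obtain ⟨φ, hφ⟩ := hC
  refine ⟨φ, IsCircGapColoring.of_forall_lt fun d hd => ?_⟩
  have hmem := Set.mem_iInter.mp hφ ⟨max d (1 / 2), le_max_right _ _, max_lt hd (by norm_num)⟩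
  exact hmem.2.mono (le_max_left _ _)

theorem isCircGapColoring_Bclique {p q : ℕ} (hq : 0 < q) :
    (Bclique p q).IsCircGapColoring p q (fun i => (i : ℝ)) :=
  ⟨fun i j hij => (Ksclique_pos_iff hq i j).mp hij.1,
    fun i j hij => (Ksclique_neg_iff i j).mp hij.1⟩

open scoped Fin.IntCast in
theorem isSpHom_Bclique_of_int {p q : ℕ} [NeZero p] (hp : 2 ∣ p) (hq : 0 < q) {g : V → ℤ}
    (hg : G.IsCircGapColoring p q (fun v => (g v : ℝ)))
    (hpar : ∀ u v, G.pos u v ∨ G.neg u v → g u % 2 ≠ g v % 2) :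
    G.IsSpHom (Bclique p q) (fun v => (g v : Fin p)) := by
  have hval : ∀ v, (((g v : Fin p)).val : ℝ) = g v + ((-(g v / p) : ℤ) : ℝ) * p := by
    intro v
    rw [← Int.cast_natCast, Fin.intCast_val_eq_emod, Int.emod_def]
    push_cast
    ring
  have hcol : G.IsCircGapColoring p q (fun v => (((g v : Fin p)).val : ℝ)) := by
    simpa only [hval] using hg.add_int_mul (by exact_mod_cast Nat.pos_of_neZero p) _
  have hpar' : ∀ u v, G.pos u v ∨ G.neg u v →
      (g u : Fin p).val % 2 ≠ (g v : Fin p).val % 2 := by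
    intro u v huv h
    have hu := Fin.intCast_val_eq_emod (p := p) (g u)
    have hv := Fin.intCast_val_eq_emod (p := p) (g v)
    have h2 : (2 : ℤ) ∣ p := by exact_mod_cast hp
    have := Int.emod_emod_of_dvd (g u) h2
    have := Int.emod_emod_of_dvd (g v) h2
    exact hpar u v huv (by omega)
  exact ⟨fun u v huv => ⟨(Ksclique_pos_iff hq _ _).mpr (hcol.1 u v huv), hpar' u v (.inl huv)⟩,
    fun u v huv => ⟨(Ksclique_neg_iff _ _).mpr (hcol.2 u v huv), hpar' u v (.inr huv)⟩⟩

theorem IsCircGapColoring.exists_int_of_four_dvd {p q : ℕ} {a : V → ℝ} (hp0 : 0 < p)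
    (hp : 4 ∣ p) (hq : Odd q) {c : V → Bool} (hc : ∀ u v, G.pos u v ∨ G.neg u v → c u ≠ c v)
    (ha : G.IsCircGapColoring p q a) :
    ∃ g : V → ℤ, (∀ u v, G.pos u v ∨ G.neg u v → g u % 2 ≠ g v % 2) ∧
      G.IsCircGapColoring p q (fun v => (g v : ℝ)) := by
  choose g hgpar hglo hghi using fun v => exists_int_near_of_parity (a v) (if c v then 1 else 0)
  have hodd : ∀ u v, G.pos u v ∨ G.neg u v → Odd (g u - g v) := by
    intro u v huv
    have hcuv := hc u v huv
    have hu := hgpar u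
    have hv := hgpar v
    rw [Int.odd_iff]
    revert hcuv hu hv
    cases c u <;> cases c v <;> simp <;> omega
  have hnear : ∀ u v, |((g u : ℝ) - g v) - (a u - a v)| < 2 := by
    intro u v
    rw [abs_lt]
    constructor <;> linarith [hglo u, hghi u, hglo v, hghi v]
  have hgap : ∀ n : ℤ, Odd n → |(n : ℝ)| < q → |(n : ℝ)| ≤ q - 2 := by
    intro n hn h
    have hq' : Odd (q : ℤ) := by exact_mod_cast hq.natCast
    rw [← Int.cast_abs] at h ⊢
    exact_mod_cast Int.abs_le_sub_two_of_odd hn hq' (by exact_mod_cast h)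
  have hp0' : (0 : ℝ) < p := by exact_mod_cast hp0
  obtain ⟨j, rfl⟩ := hp
  refine ⟨g, fun u v huv => ?_, fun u v huv => ?_, fun u v huv => ?_⟩
  · have := Int.odd_iff.mp (hodd u v huv)
    omega
  · refine le_cdist_of_abs_sub_lt hp0' (ha.1 u v huv) (hnear u v) fun k hk => ?_
    have hcast : (g u : ℝ) - g v - k * ↑(4 * j) = ((g u - g v - k * (4 * j) : ℤ) : ℝ) := by
      push_cast
      ring
    rw [hcast] at hk ⊢
    exact hgap _ ((hodd u v (.inl huv)).sub_even ⟨2 * k * j, by ring⟩) hk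
  · refine le_cdist_of_abs_sub_lt (δ := 2) hp0' (ha.2 u v huv) ?_ fun k hk => ?_
    · convert hnear u v using 2
      ring
    have hcast : (g u : ℝ) - (g v + ↑(4 * j) / 2) - k * ↑(4 * j) =
        ((g u - g v - (2 * j + k * (4 * j)) : ℤ) : ℝ) := by
      push_cast
      ring
    rw [hcast] at hk ⊢
    exact hgap _ ((hodd u v (.inr huv)).sub_even ⟨j + 2 * k * j, by ring⟩) hk

theorem IsCircGapColoring.floor {p q : ℕ} {a : V → ℝ} (hp0 : 0 < p) (hp : Even p)
    (ha : G.IsCircGapColoring p q a) : G.IsCircGapColoring p q (fun v => (⌊a v⌋ : ℝ)) := by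
  have hnear : ∀ u v, |((⌊a u⌋ : ℝ) - ⌊a v⌋) - (a u - a v)| < 1 := by
    intro u v
    rw [abs_lt]
    constructor <;> linarith [Int.floor_le (a u), Int.lt_floor_add_one (a u),
      Int.floor_le (a v), Int.lt_floor_add_one (a v)]
  have hgap : ∀ n : ℤ, |(n : ℝ)| < q → |(n : ℝ)| ≤ q - 1 := by
    intro n h
    rw [← Int.cast_abs] at h ⊢
    have : |n| < q := by exact_mod_cast h
    exact_mod_cast (by omega : |n| ≤ q - 1)
  have hp0' : (0 : ℝ) < p := by exact_mod_cast hp0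
  obtain ⟨m, rfl⟩ := hp
  refine ⟨fun u v huv => ?_, fun u v huv => ?_⟩
  · refine le_cdist_of_abs_sub_lt hp0' (ha.1 u v huv) (hnear u v) fun k hk => ?_
    have hcast : (⌊a u⌋ : ℝ) - ⌊a v⌋ - k * ↑(m + m) =
        ((⌊a u⌋ - ⌊a v⌋ - k * (m + m) : ℤ) : ℝ) := by
      push_cast
      ring
    rw [hcast] at hk ⊢
    exact hgap _ hk
  · refine le_cdist_of_abs_sub_lt (δ := 1) hp0' (ha.2 u v huv) ?_ fun k hk => ?_
    · convert hnear u v using 2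
      ring
    have hcast : (⌊a u⌋ : ℝ) - (⌊a v⌋ + ↑(m + m) / 2) - k * ↑(m + m) =
        ((⌊a u⌋ - ⌊a v⌋ - (m + k * (m + m)) : ℤ) : ℝ) := by
      push_cast
      ring
    rw [hcast] at hk ⊢
    exact hgap _ hk

theorem IsCircGapColoring.exists_switch_int_of_odd {p q m : ℕ} {a : V → ℝ} (hp : p = 2 * m)
    (hm : Odd m) {c : V → Bool} (hc : ∀ u v, G.pos u v ∨ G.neg u v → c u ≠ c v)
    (ha : G.IsCircGapColoring p q a) :
    ∃ (s : V → Bool) (g : V → ℤ), (∀ u v, G.pos u v ∨ G.neg u v → g u % 2 ≠ g v % 2) ∧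
      (G.switch s).IsCircGapColoring p q (fun v => (g v : ℝ)) := by
  have hp0 : 0 < p := by have := hm.pos; omega
  have hm2 : (m : ℤ) % 2 = 1 := by exact_mod_cast Nat.odd_iff.mp hm
  let b : V → ℤ := fun v => if c v then 1 else 0
  let s : V → Bool := fun v => decide (⌊a v⌋ % 2 ≠ b v)
  have hb : ∀ v, b v = 0 ∨ b v = 1 := fun v => by by_cases h : c v <;> simp [b, h]
  have hgpar : ∀ v, (⌊a v⌋ + if s v then (m : ℤ) else 0) % 2 = b v := by
    intro v
    have := hb v
    by_cases h : ⌊a v⌋ % 2 = b v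
    · simp [s, h]
    · simp [s, h]
      omega
  refine ⟨s, fun v => ⌊a v⌋ + if s v then (m : ℤ) else 0, fun u v huv => ?_, ?_⟩
  · rw [hgpar, hgpar]
    have := hc u v huv
    revert this
    simp only [b]
    cases c u <;> cases c v <;> simp
  · have hsw := (ha.floor hp0 (hp ▸ even_two_mul m)).switch (by exact_mod_cast hp0) s
    convert hsw using 2 with v
    by_cases h : s v <;> simp [h, hp]

theorem swHom_Bclique_of_isCircGapColoring {p q m : ℕ} [NeZero p] {a : V → ℝ} (hp : p = 2 * m)
    (hq : 0 < q) (hq4 : 4 ∣ p → Odd q) {c : V → Bool}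
    (hc : ∀ u v, G.pos u v ∨ G.neg u v → c u ≠ c v) (ha : G.IsCircGapColoring p q a) :
    G.SwHom (Bclique p q) := by
  rcases Nat.even_or_odd m with hm | hm
  · have h4 : 4 ∣ p := by
      obtain ⟨k, rfl⟩ := hm
      exact ⟨k, by omega⟩
    obtain ⟨g, hpar, hg⟩ := ha.exists_int_of_four_dvd (Nat.pos_of_neZero p) h4 (hq4 h4) hc
    exact (isSpHom_Bclique_of_int ⟨m, hp⟩ hq hg hpar).swHom
  · obtain ⟨s, g, hpar, hg⟩ := ha.exists_switch_int_of_odd hp hm hc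
    exact ⟨s, _, isSpHom_Bclique_of_int ⟨m, hp⟩ hq hg fun u v huv =>
      hpar u v (switch_pos_or_neg huv)⟩

end SGraph

theorem Nat.odd_of_four_dvd_of_gcd_le_two {p q : ℕ} (hp : 4 ∣ p) (hq : 0 < q)
    (hpq : Nat.gcd p q ≤ 2 ∧ (Nat.gcd p q = 2 → p % 4 = 2)) : Odd q := by
  rw [Nat.odd_iff]
  by_contra hqe
  have h2 : 2 ∣ Nat.gcd p q := Nat.dvd_gcd (dvd_trans ⟨2, rfl⟩ hp) (by omega)
  have := hpq.2 (le_antisymm hpq.1 (Nat.le_of_dvd (Nat.gcd_pos_of_pos_right p hq) h2))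
  omega

theorem circChrom_le_iff_swHom_Bclique_general {V : Type} (G : SGraph V)
    (hbip : G.Bipartite) (p q : ℕ) (hp : 2 ∣ p) (hq : 0 < q) (h2q : 2 * q ≤ p)
    (hsimp : Nat.gcd p q ≤ 2 ∧ (Nat.gcd p q = 2 → p % 4 = 2)) :
    G.circChrom ≤ (p : ℝ) / q ↔ G.SwHom (Bclique p q) := by
  have : NeZero p := ⟨by omega⟩
  have hq' : (0 : ℝ) < q := by exact_mod_cast hq
  have hp' : (0 : ℝ) < p := by exact_mod_cast Nat.pos_of_neZero p
  constructor
  · intro hle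
    obtain ⟨φ, hφ⟩ := SGraph.exists_isCircColoring_of_circChrom_le
      ⟨4, by norm_num, hbip.exists_isCircColoring_four⟩ hle (div_pos hp' hq')
    have ha := (SGraph.isCircGapColoring_one.mpr hφ).mul hq' (div_pos hp' hq')
    rw [mul_div_cancel₀ _ hq'.ne', mul_one] at ha
    obtain ⟨m, hm⟩ := hp
    obtain ⟨c, hc⟩ := hbip
    exact SGraph.swHom_Bclique_of_isCircGapColoring hm hq
      (Nat.odd_of_four_dvd_of_gcd_le_two · hq hsimp) hc ha
  · rintro ⟨s, f, hf⟩
    have hcol := (hf.isCircGapColoring_comp (SGraph.isCircGapColoring_Bclique hq)).of_switch hp'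
    have := hcol.mul (inv_pos.mpr hq') hp'
    rw [inv_mul_cancel₀ hq'.ne', ← div_eq_inv_mul] at this
    exact SGraph.circChrom_le ((one_le_div hq').mpr (by exact_mod_cast (by omega : q ≤ p)))
      (SGraph.isCircGapColoring_one.mp this)

/-- for a signed bipartite graph `(G,σ)` and `p/q ∈ [2,4]`, `p` even and
`p/q` in simplest form subject to that, `χ_c(G,σ) ≤ p/q` iff `(G,σ)` admits a
switching homomorphism to `B_{p;q}`. -/
theorem circChrom_le_iff_swHom_Bclique {V : Type} [Fintype V] (G : SGraph V)
    (hbip : G.Bipartite) (p q : ℕ) (hp : 2 ∣ p) (hq : 0 < q) (h2q : 2 * q ≤ p)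
    (h4q : p ≤ 4 * q)
    (hsimp : Nat.gcd p q ≤ 2 ∧ (Nat.gcd p q = 2 → p % 4 = 2)) :
    G.circChrom ≤ (p : ℝ) / q ↔ G.SwHom (Bclique p q) :=
  circChrom_le_iff_swHom_Bclique_general G hbip p q hp hq h2q hsimp
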